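/- In Tsirelson's space T, let z_n = (2/n²) ∑_{i=1}^{n²} e_{n³+i}. Then ∥z_n∥ = 1 for each n ≥ 2, and for every k ≥ 2, lim_{n→∞} ∥z_n∥_k = 1/2. -/

import Mathlib

/-- Restriction `E x` of a finitely supported sequence `x` to a set `E ⊆ ℕ`. -/
noncomputable def tRes (E : Finset ℕ) (x : ℕ →₀ ℝ) : ℕ →₀ ℝ := x.filter (· ∈ E)

/-- An admissible family for the Tsirelson norm: `n ≤ E_1 < ... < E_n`. -/
def tAdm (n : ℕ) (E : Fin n → Finset ℕ) : Prop :=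
  (∀ i : Fin n, ∀ a ∈ E i, n ≤ a) ∧
  (∀ i j : Fin n, i < j → ∀ a ∈ E i, ∀ b ∈ E j, a < b)

/-- `N` satisfies the implicit equation of the Tsirelson norm:
`‖x‖ = max(‖x‖_∞, sup_{n ≥ 2, n ≤ E_1 < ... < E_n} (1/2) ∑ ‖E_i x‖)`. -/
def tEq (N : (ℕ →₀ ℝ) → ℝ) : Prop :=
  ∀ x : ℕ →₀ ℝ, N x = max (⨆ i : ℕ, |x i|)
    (sSup {s : ℝ | ∃ n : ℕ, 2 ≤ n ∧ ∃ E : Fin n → Finset ℕ, tAdm n E ∧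
      s = (1 / 2) * ∑ i, N (tRes (E i) x)})

/-- `‖x‖_k = sup (1/2) ∑_{i=1}^k ‖E_i x‖` over `k ≤ E_1 < ... < E_k`. -/
noncomputable def tNormk (N : (ℕ →₀ ℝ) → ℝ) (k : ℕ) (x : ℕ →₀ ℝ) : ℝ :=
  sSup {s : ℝ | ∃ E : Fin k → Finset ℕ, tAdm k E ∧
    s = (1 / 2) * ∑ i, N (tRes (E i) x)}

/-- `z_n = (2/n²) ∑_{i=1}^{n²} e_{n³+i}`. -/
noncomputable def zvec (n : ℕ) : ℕ →₀ ℝ :=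
  ∑ i ∈ Finset.range (n ^ 2), Finsupp.single (n ^ 3 + i + 1) (2 / (n ^ 2 : ℝ))

/-!
Every solution `N` of the implicit equation satisfies `‖x‖_∞ ≤ N x ≤ max ‖x‖_∞ (‖x‖₁ / 2)`.
The upper bound is proved by induction on the size of the support: an admissible family of
pieces of `x` either has one piece carrying all of `x`, which contributes only `N x / 2`, or
consists of vectors of smaller support, whose norms are then at most their `ℓ₁` norms.

For `z_n` we have `‖z_n‖_∞ = 2 / n²` and `‖z_n‖₁ = 2`, so `N z_n ≤ 1`; since the `n²` points of
its support lie beyond `n³`, its singleton pieces are admissible and give `N z_n ≥ 1`. Taking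
`z_n` as a single piece gives `‖z_n‖_k ≥ 1/2`, and bounding each of `k` pieces as above gives
`‖z_n‖_k ≤ (2k / n² + 1) / 2`.
-/

open Finset

noncomputable def l1Norm (x : ℕ →₀ ℝ) : ℝ := ∑ i ∈ x.support, |x i|

lemma l1Norm_nonneg (x : ℕ →₀ ℝ) : 0 ≤ l1Norm x :=
  sum_nonneg fun i _ => abs_nonneg (x i)

lemma abs_apply_le_l1Norm (x : ℕ →₀ ℝ) (i : ℕ) : |x i| ≤ l1Norm x := by
  by_cases hi : i ∈ x.support
  · exact single_le_sum (fun j _ => abs_nonneg (x j)) hi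
  · rw [Finsupp.notMem_support_iff.mp hi, abs_zero]
    exact l1Norm_nonneg x

lemma bddAbove_range_abs (x : ℕ →₀ ℝ) : BddAbove (Set.range fun i => |x i|) :=
  ⟨l1Norm x, Set.forall_mem_range.mpr (abs_apply_le_l1Norm x)⟩

lemma iSup_abs_nonneg (x : ℕ →₀ ℝ) : 0 ≤ ⨆ i, |x i| :=
  Real.iSup_nonneg fun i => abs_nonneg (x i)

lemma iSup_abs_le_l1Norm (x : ℕ →₀ ℝ) : (⨆ i, |x i|) ≤ l1Norm x :=
  ciSup_le (abs_apply_le_l1Norm x)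

lemma tRes_apply (E : Finset ℕ) (x : ℕ →₀ ℝ) (i : ℕ) :
    tRes E x i = if i ∈ E then x i else 0 :=
  Finsupp.filter_apply _ _ _

lemma support_tRes (E : Finset ℕ) (x : ℕ →₀ ℝ) :
    (tRes E x).support = {i ∈ x.support | i ∈ E} :=
  Finsupp.support_filter _ _

lemma tRes_eq_self {E : Finset ℕ} {x : ℕ →₀ ℝ} (h : x.support ⊆ E) : tRes E x = x :=
  (Finsupp.filter_eq_self_iff _ _).mpr fun _ hi => h (Finsupp.mem_support_iff.mpr hi)

lemma tRes_eq_zero {E : Finset ℕ} {x : ℕ →₀ ℝ} (h : Disjoint x.support E) : tRes E x = 0 :=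
  (Finsupp.filter_eq_zero_iff _ _).mpr fun _ hi =>
    Finsupp.notMem_support_iff.mp fun hx => disjoint_left.mp h hx hi

lemma card_support_tRes_lt {E : Finset ℕ} {x : ℕ →₀ ℝ} (h : ¬ x.support ⊆ E) :
    #(tRes E x).support < #x.support := by
  rw [support_tRes]
  exact card_lt_card (filter_ssubset.mpr (not_subset.mp h))

lemma abs_tRes_apply_le (E : Finset ℕ) (x : ℕ →₀ ℝ) (i : ℕ) : |tRes E x i| ≤ |x i| := by
  rw [tRes_apply]
  split_ifs <;> simp

lemma iSup_abs_tRes_le (E : Finset ℕ) (x : ℕ →₀ ℝ) : (⨆ i, |tRes E x i|) ≤ ⨆ i, |x i| :=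
  ciSup_mono (bddAbove_range_abs x) (abs_tRes_apply_le E x)

lemma l1Norm_tRes (E : Finset ℕ) (x : ℕ →₀ ℝ) :
    l1Norm (tRes E x) = ∑ i ∈ x.support with i ∈ E, |x i| := by
  rw [l1Norm, support_tRes]
  refine sum_congr rfl fun i hi => ?_
  rw [tRes_apply, if_pos (mem_filter.mp hi).2]

lemma tAdm.disjoint {n : ℕ} {E : Fin n → Finset ℕ} (hE : tAdm n E) {i j : Fin n} (hij : i ≠ j) :
    Disjoint (E i) (E j) := by
  refine disjoint_left.mpr fun a hai haj => ?_
  rcases hij.lt_or_gt with h | h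
  · exact lt_irrefl a (hE.2 i j h a hai a haj)
  · exact lt_irrefl a (hE.2 j i h a haj a hai)

lemma tAdm.sum_l1Norm_tRes_le {n : ℕ} {E : Fin n → Finset ℕ} (hE : tAdm n E) (x : ℕ →₀ ℝ) :
    ∑ i, l1Norm (tRes (E i) x) ≤ l1Norm x := by
  simp only [l1Norm_tRes]
  rw [← sum_biUnion (t := fun j => {i ∈ x.support | i ∈ E j}) fun i _ j _ hij =>
    disjoint_left.mpr fun _ ha hb =>
      disjoint_left.mp (hE.disjoint hij) (mem_filter.mp ha).2 (mem_filter.mp hb).2]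
  exact sum_le_sum_of_subset_of_nonneg (biUnion_subset.mpr fun _ _ => filter_subset _ _)
    fun i _ _ => abs_nonneg (x i)

namespace tEq

variable {N : (ℕ →₀ ℝ) → ℝ}

lemma map_zero (hN : tEq N) : N 0 = 0 := by
  have h0 := hN 0
  simp only [Finsupp.coe_zero, Pi.zero_apply, abs_zero, ciSup_const] at h0
  set S : Set ℝ := {s | ∃ n : ℕ, 2 ≤ n ∧ ∃ E : Fin n → Finset ℕ, tAdm n E ∧
    s = (1 / 2) * ∑ i, N (tRes (E i) 0)}
  have hmem : 2 * N 0 ∈ S :=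
    ⟨4, by norm_num, fun _ => ∅, ⟨by simp, by simp⟩, by simp [tRes, Finsupp.filter_zero]; ring⟩
  by_cases hS : BddAbove S
  · have hle : 2 * N 0 ≤ N 0 := (le_csSup hS hmem).trans (h0 ▸ le_max_right _ _)
    have hge : 0 ≤ N 0 := h0 ▸ le_max_left _ _
    linarith
  · rwa [Real.sSup_of_not_bddAbove hS, max_self] at h0

lemma le_max_l1Norm (hN : tEq N) (x : ℕ →₀ ℝ) :
    N x ≤ max (⨆ i, |x i|) (l1Norm x / 2) := by
  induction hm : #x.support using Nat.strong_induction_on generalizing x with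
  | _ m ih =>
  have hpiece : ∀ n (E : Fin n → Finset ℕ), tAdm n E →
      1 / 2 * ∑ i, N (tRes (E i) x) ≤ max (N x / 2) (l1Norm x / 2) := by
    intro n E hE
    by_cases hfull : ∃ j, x.support ⊆ E j
    · obtain ⟨j, hj⟩ := hfull
      have hsum : ∑ i, N (tRes (E i) x) = N x := by
        rw [sum_eq_single j (fun i _ hij => ?_) (by simp), tRes_eq_self hj]
        rw [tRes_eq_zero (disjoint_of_subset_left hj (hE.disjoint hij.symm)), hN.map_zero]
      rw [hsum]
      exact le_max_of_le_left (by linarith)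
    · simp only [not_exists] at hfull
      have hsmall : ∀ i, N (tRes (E i) x) ≤ l1Norm (tRes (E i) x) := fun i =>
        (ih _ (hm ▸ card_support_tRes_lt (hfull i)) _ rfl).trans
          (max_le (iSup_abs_le_l1Norm _) (by linarith [l1Norm_nonneg (tRes (E i) x)]))
      have := (sum_le_sum fun i _ => hsmall i).trans (hE.sum_l1Norm_tRes_le x)
      exact le_max_of_le_right (by linarith)
  have hsup : sSup {s : ℝ | ∃ n : ℕ, 2 ≤ n ∧ ∃ E : Fin n → Finset ℕ, tAdm n E ∧
      s = (1 / 2) * ∑ i, N (tRes (E i) x)} ≤ max (N x / 2) (l1Norm x / 2) :=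
    Real.sSup_le (by rintro _ ⟨n, -, E, hE, rfl⟩; exact hpiece n E hE)
      (le_max_of_le_right (by linarith [l1Norm_nonneg x]))
  have hx := (hN x).trans_le (max_le_max le_rfl hsup)
  rcases le_max_iff.mp hx with h | h
  · exact le_max_of_le_left h
  · rcases le_max_iff.mp h with h | h
    · exact le_max_of_le_left (by linarith [iSup_abs_nonneg x])
    · exact le_max_of_le_right h

lemma le_l1Norm (hN : tEq N) (x : ℕ →₀ ℝ) : N x ≤ l1Norm x :=
  (hN.le_max_l1Norm x).trans
    (max_le (iSup_abs_le_l1Norm x) (by linarith [l1Norm_nonneg x]))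

lemma le_iSup_abs_add_half_l1Norm (hN : tEq N) (x : ℕ →₀ ℝ) :
    N x ≤ (⨆ i, |x i|) + l1Norm x / 2 :=
  (hN.le_max_l1Norm x).trans
    (max_le_add_of_nonneg (iSup_abs_nonneg x) (by linarith [l1Norm_nonneg x]))

lemma sum_tRes_le_l1Norm (hN : tEq N) {n : ℕ} {E : Fin n → Finset ℕ} (hE : tAdm n E)
    (x : ℕ →₀ ℝ) : ∑ i, N (tRes (E i) x) ≤ l1Norm x :=
  (sum_le_sum fun _ _ => hN.le_l1Norm _).trans (hE.sum_l1Norm_tRes_le x)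

lemma half_sum_tRes_le (hN : tEq N) {n : ℕ} (hn : 2 ≤ n) {E : Fin n → Finset ℕ}
    (hE : tAdm n E) (x : ℕ →₀ ℝ) : 1 / 2 * ∑ i, N (tRes (E i) x) ≤ N x := by
  rw [hN x]
  refine le_max_of_le_right (le_csSup ⟨l1Norm x / 2, ?_⟩ ⟨n, hn, E, hE, rfl⟩)
  rintro _ ⟨m, -, F, hF, rfl⟩
  linarith [hN.sum_tRes_le_l1Norm hF x]

lemma abs_apply_le (hN : tEq N) (x : ℕ →₀ ℝ) (i : ℕ) : |x i| ≤ N x := by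
  rw [hN x]
  exact le_max_of_le_left (le_ciSup (bddAbove_range_abs x) i)

lemma nonneg (hN : tEq N) (x : ℕ →₀ ℝ) : 0 ≤ N x :=
  (abs_nonneg _).trans (hN.abs_apply_le x 0)

lemma abs_apply_le_tRes_singleton (hN : tEq N) (x : ℕ →₀ ℝ) (a : ℕ) : |x a| ≤ N (tRes {a} x) := by
  simpa [tRes_apply] using hN.abs_apply_le (tRes {a} x) a

lemma half_l1Norm_le (hN : tEq N) {x : ℕ →₀ ℝ} (hcard : 2 ≤ #x.support)
    (hsupp : ∀ i ∈ x.support, #x.support ≤ i) : l1Norm x / 2 ≤ N x := by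
  set e := x.support.orderEmbOfFin rfl
  have hE : tAdm #x.support fun j => {e j} := by
    refine ⟨fun j a ha => ?_, fun i j hij a ha b hb => ?_⟩
    · rw [mem_singleton.mp ha]
      exact hsupp _ (x.support.orderEmbOfFin_mem rfl j)
    · rw [mem_singleton.mp ha, mem_singleton.mp hb]
      exact e.strictMono hij
  have hl1 : l1Norm x = ∑ j, |x (e j)| := by
    conv_lhs => rw [l1Norm, ← x.support.map_orderEmbOfFin_univ rfl]
    rw [sum_map]
    rfl
  calc l1Norm x / 2 = 1 / 2 * ∑ j, |x (e j)| := by rw [hl1]; ring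
    _ ≤ 1 / 2 * ∑ j, N (tRes {e j} x) := by
        gcongr with j
        exact hN.abs_apply_le_tRes_singleton x (e j)
    _ ≤ N x := hN.half_sum_tRes_le hcard hE x

lemma sum_tRes_le (hN : tEq N) {k : ℕ} {E : Fin k → Finset ℕ} (hE : tAdm k E) (x : ℕ →₀ ℝ) :
    ∑ i, N (tRes (E i) x) ≤ k * (⨆ j, |x j|) + l1Norm x / 2 :=
  calc ∑ i, N (tRes (E i) x) ≤ ∑ i, ((⨆ j, |x j|) + l1Norm (tRes (E i) x) / 2) :=
        sum_le_sum fun i _ => (hN.le_iSup_abs_add_half_l1Norm _).trans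
          (add_le_add_left (iSup_abs_tRes_le _ _) _)
    _ = k * (⨆ j, |x j|) + (∑ i, l1Norm (tRes (E i) x)) / 2 := by
        rw [sum_add_distrib, ← sum_div]
        simp
    _ ≤ k * (⨆ j, |x j|) + l1Norm x / 2 := by
        gcongr
        exact hE.sum_l1Norm_tRes_le x

lemma tNormk_le (hN : tEq N) (k : ℕ) (x : ℕ →₀ ℝ) :
    tNormk N k x ≤ (k * (⨆ j, |x j|) + l1Norm x / 2) / 2 := by
  refine Real.sSup_le (by rintro _ ⟨E, hE, rfl⟩; linarith [hN.sum_tRes_le hE x]) ?_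
  have := iSup_abs_nonneg x
  have := l1Norm_nonneg x
  positivity

lemma half_sum_tRes_le_tNormk (hN : tEq N) {k : ℕ} {E : Fin k → Finset ℕ} (hE : tAdm k E)
    (x : ℕ →₀ ℝ) : 1 / 2 * ∑ i, N (tRes (E i) x) ≤ tNormk N k x :=
  le_csSup ⟨(k * (⨆ j, |x j|) + l1Norm x / 2) / 2,
    by rintro _ ⟨F, hF, rfl⟩; linarith [hN.sum_tRes_le hF x]⟩ ⟨E, hE, rfl⟩

lemma half_le_tNormk (hN : tEq N) {k : ℕ} (hk : 0 < k) {x : ℕ →₀ ℝ}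
    (hx : ∀ i ∈ x.support, k ≤ i) : N x / 2 ≤ tNormk N k x := by
  set E : Fin k → Finset ℕ := fun j => if (j : ℕ) = 0 then x.support else ∅
  have hE : tAdm k E := by
    refine ⟨fun j a ha => ?_, fun i j hij a _ b hb => ?_⟩
    · simp only [E] at ha
      split_ifs at ha
      exacts [hx a ha, absurd ha (notMem_empty a)]
    · have hj : (j : ℕ) ≠ 0 := (Nat.zero_le i).trans_lt hij |>.ne'
      simp [E, hj] at hb
  have hfirst : N (tRes (E ⟨0, hk⟩) x) = N x := by
    simp only [E, if_true, tRes_eq_self subset_rfl]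
  calc N x / 2 ≤ 1 / 2 * ∑ j, N (tRes (E j) x) := by
        rw [← hfirst]
        linarith [single_le_sum (fun j _ => hN.nonneg (tRes (E j) x)) (mem_univ ⟨0, hk⟩)]
    _ ≤ tNormk N k x := hN.half_sum_tRes_le_tNormk hE x

end tEq

lemma zvec_eq_sum_single (n : ℕ) :
    zvec n = ∑ a ∈ Ioc (n ^ 3) (n ^ 3 + n ^ 2), Finsupp.single a (2 / (n ^ 2 : ℝ)) :=
  sum_nbij' (fun i => n ^ 3 + i + 1) (fun a => a - n ^ 3 - 1)
    (fun i hi => by simp at hi ⊢; omega) (fun a ha => by simp at ha ⊢; omega)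
    (fun i _ => by omega) (fun a ha => by simp at ha; omega) (fun _ _ => rfl)

lemma zvec_apply (n i : ℕ) :
    zvec n i = if i ∈ Ioc (n ^ 3) (n ^ 3 + n ^ 2) then 2 / (n ^ 2 : ℝ) else 0 := by
  simp only [zvec_eq_sum_single, Finsupp.finsetSum_apply, Finsupp.single_apply, sum_ite_eq']

lemma support_zvec {n : ℕ} (hn : n ≠ 0) : (zvec n).support = Ioc (n ^ 3) (n ^ 3 + n ^ 2) := by
  ext i
  simp [zvec_apply, hn]

lemma l1Norm_zvec {n : ℕ} (hn : n ≠ 0) : l1Norm (zvec n) = 2 := by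
  rw [l1Norm, support_zvec hn, sum_congr rfl fun i hi => by rw [zvec_apply, if_pos hi],
    sum_const, Nat.card_Ioc, Nat.add_sub_cancel_left, nsmul_eq_mul, abs_of_pos (by positivity)]
  push_cast
  field_simp

lemma iSup_abs_zvec_le (n : ℕ) : (⨆ i, |zvec n i|) ≤ 2 / (n ^ 2 : ℝ) := by
  refine ciSup_le fun i => ?_
  rw [zvec_apply]
  split_ifs
  · exact (abs_of_nonneg (by positivity)).le
  · simp only [abs_zero]
    positivity

lemma tEq.apply_zvec {N : (ℕ →₀ ℝ) → ℝ} (hN : tEq N) {n : ℕ} (hn : 2 ≤ n) : N (zvec n) = 1 := by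
  have hsupp := support_zvec (n := n) (by omega)
  have hcard : #(zvec n).support = n ^ 2 := by simp [hsupp]
  have hc : 2 / (n ^ 2 : ℝ) ≤ 1 := by
    rw [div_le_one (by positivity)]
    nlinarith [show (2 : ℝ) ≤ n by exact_mod_cast hn]
  refine le_antisymm ((hN.le_max_l1Norm _).trans (max_le ((iSup_abs_zvec_le n).trans hc) ?_)) ?_
  · rw [l1Norm_zvec (by omega)]
    norm_num
  · have hn3 : n ^ 2 ≤ n ^ 3 := Nat.pow_le_pow_right (by omega) (by omega)
    have := hN.half_l1Norm_le (x := zvec n) (by rw [hcard]; nlinarith)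
      (fun i hi => by rw [hsupp, mem_Ioc] at hi; omega)
    rwa [l1Norm_zvec (by omega), div_self two_ne_zero] at this

theorem stmt11 (N : (ℕ →₀ ℝ) → ℝ) (hN : tEq N) :
    (∀ n : ℕ, 2 ≤ n → N (zvec n) = 1) ∧
    (∀ k : ℕ, 2 ≤ k →
      Filter.Tendsto (fun n => tNormk N k (zvec n)) Filter.atTop (nhds (1 / 2))) := by
  refine ⟨fun n hn => hN.apply_zvec hn, fun k hk => ?_⟩
  have hupper : Filter.Tendsto (fun n : ℕ => (k * (2 / (n : ℝ) ^ 2) + 2 / 2) / 2)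
      Filter.atTop (nhds (1 / 2)) := by
    have h : Filter.Tendsto (fun n : ℕ => 2 / (n : ℝ) ^ 2) Filter.atTop (nhds 0) :=
      tendsto_const_nhds.div_atTop
        ((Filter.tendsto_pow_atTop two_ne_zero).comp tendsto_natCast_atTop_atTop)
    simpa using ((h.const_mul (k : ℝ)).add_const (2 / 2 : ℝ)).div_const (2 : ℝ)
  refine tendsto_of_tendsto_of_tendsto_of_le_of_le' tendsto_const_nhds hupper ?_ ?_
  · filter_upwards [Filter.eventually_ge_atTop k] with n hkn
    have hn3 : n ≤ n ^ 3 := Nat.le_self_pow (by omega) n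
    have := hN.half_le_tNormk (k := k) (x := zvec n) (by omega) fun i hi => by
      rw [support_zvec (by omega), mem_Ioc] at hi
      omega
    rwa [hN.apply_zvec (by omega)] at this
  · filter_upwards [Filter.eventually_ge_atTop 1] with n hn
    calc tNormk N k (zvec n) ≤ (k * (⨆ i, |zvec n i|) + l1Norm (zvec n) / 2) / 2 :=
          hN.tNormk_le k _
      _ ≤ (k * (2 / (n : ℝ) ^ 2) + 2 / 2) / 2 := by
          rw [l1Norm_zvec (by omega)]
          gcongr
          exact iSup_abs_zvec_le n
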